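/- In the truth-biased model under any of the three tie-breaking rules, if b is a PNE then every voter either votes truthfully (b_i = a_i) or votes for a candidate in the winning set W(b). -/
import Mathlib


open Finset

/-- A ballot vector: each voter either abstains (`none`) or votes for a candidate. -/
abbrev Ballot (n m : ℕ) := Fin n → Option (Fin m)

/-- The plurality score of candidate `c` under ballot vector `b`. -/
def sc {n m : ℕ} (b : Ballot n m) (c : Fin m) : ℕ :=
  (univ.filter fun i => b i = some c).card

/-- The maximum plurality score. -/
def maxScore {n m : ℕ} (b : Ballot n m) : ℕ :=
  univ.sup fun c : Fin m => sc b c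

/-- The winning set `W(b)`: candidates with maximum score. -/
def winSet {n m : ℕ} (b : Ballot n m) : Finset (Fin m) :=
  univ.filter fun c => sc b c = maxScore b

/-- `H(b)`: candidates whose score is the maximum minus one. -/
def Hset {n m : ℕ} (b : Ballot n m) : Finset (Fin m) :=
  univ.filter fun c => sc b c + 1 = maxScore b

/-- `H'(b)`: candidates whose score is the maximum minus two. -/
def H'set {n m : ℕ} (b : Ballot n m) : Finset (Fin m) :=
  univ.filter fun c => sc b c + 2 = maxScore b

/-- `c` is the winner under lexicographic tie-breaking: the minimum-index member of `W(b)`. -/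
def IsLexWin {n m : ℕ} (b : Ballot n m) (c : Fin m) : Prop :=
  c ∈ winSet b ∧ ∀ c' ∈ winSet b, (c : ℕ) ≤ (c' : ℕ)

/-- The (degenerate) lottery induced by lexicographic tie-breaking. -/
def pLex {n m : ℕ} (b : Ballot n m) : Fin m → ℚ := fun c =>
  if c ∈ winSet b ∧ ∀ c' ∈ winSet b, (c : ℕ) ≤ (c' : ℕ) then 1 else 0

/-- The lottery induced by random-candidate tie-breaking: uniform over `W(b)`. -/
def pRC {n m : ℕ} (b : Ballot n m) : Fin m → ℚ := fun c =>
  if c ∈ winSet b then ((winSet b).card : ℚ)⁻¹ else 0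

/-- The lottery induced by random-voter tie-breaking: a uniformly random voter's
favourite member of `W(b)` is elected. -/
def pRV {n m : ℕ} (u : Fin n → Fin m → ℕ) (b : Ballot n m) : Fin m → ℚ := fun c =>
  ((univ.filter fun i : Fin n =>
      c ∈ winSet b ∧ ∀ c' ∈ winSet b, u i c' ≤ u i c).card : ℚ) / (n : ℚ)

/-- Expected utility of a lottery `p` for a voter with utility function `ui`. -/
def EU {m : ℕ} (ui : Fin m → ℕ) (p : Fin m → ℚ) : ℚ := ∑ c, p c * (ui c : ℚ)

/-- Payoff of lazy voter `i`: expected utility plus a bonus `ε` for abstaining. -/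
def lazyU {n m : ℕ} (p : Ballot n m → Fin m → ℚ) (u : Fin n → Fin m → ℕ)
    (ε : ℚ) (i : Fin n) (b : Ballot n m) : ℚ :=
  EU (u i) (p b) + if b i = none then ε else 0

/-- Pure Nash equilibrium of the lazy-voter game. -/
def lazyPNE {n m : ℕ} (p : Ballot n m → Fin m → ℚ) (u : Fin n → Fin m → ℕ)
    (ε : ℚ) (b : Ballot n m) : Prop :=
  ∀ (i : Fin n) (b' : Option (Fin m)),
    lazyU p u ε i (Function.update b i b') ≤ lazyU p u ε i b

/-- View a non-abstaining (truth-biased) ballot vector as a general ballot vector. -/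
def tv {n m : ℕ} (b : Fin n → Fin m) : Ballot n m := fun i => some (b i)

/-- Payoff of truth-biased voter `i`: expected utility plus a bonus `ε` for voting
truthfully (abstention, which would yield `-∞`, is never used). -/
def tbU {n m : ℕ} (p : Ballot n m → Fin m → ℚ) (u : Fin n → Fin m → ℕ)
    (a : Fin n → Fin m) (ε : ℚ) (i : Fin n) (b : Fin n → Fin m) : ℚ :=
  EU (u i) (p (tv b)) + if b i = a i then ε else 0

/-- Pure Nash equilibrium of the truth-biased game. -/
def tbPNE {n m : ℕ} (p : Ballot n m → Fin m → ℚ) (u : Fin n → Fin m → ℕ)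
    (a : Fin n → Fin m) (ε : ℚ) (b : Fin n → Fin m) : Prop :=
  ∀ (i : Fin n) (b' : Fin m),
    tbU p u a ε i (Function.update b i b') ≤ tbU p u a ε i b


/-! ### Auxiliary lemmas -/

lemma sc_le_max {n m : ℕ} (b : Ballot n m) (c : Fin m) : sc b c ≤ maxScore b :=
  Finset.le_sup (mem_univ c)

lemma winSet_nonempty {n m : ℕ} (hm : 0 < m) (b : Ballot n m) : (winSet b).Nonempty := by
  have : Nonempty (Fin m) := ⟨⟨0, hm⟩⟩
  obtain ⟨c, -, hc⟩ := Finset.exists_mem_eq_sup (univ : Finset (Fin m)) univ_nonempty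
    (fun c => sc b c)
  exact ⟨c, mem_filter.mpr ⟨mem_univ c, hc.symm⟩⟩

lemma sc_tv_eq_sum {n m : ℕ} (g : Fin n → Fin m) (c : Fin m) :
    sc (tv g) c = ∑ j, if g j = c then 1 else 0 := by
  rw [sc, Finset.card_filter]
  exact Finset.sum_congr rfl fun j _ => by simp [tv]

lemma sc_update {n m : ℕ} (b : Fin n → Fin m) (i : Fin n) (t : Fin m) (c : Fin m) :
    sc (tv (Function.update b i t)) c + (if b i = c then 1 else 0)
      = sc (tv b) c + (if t = c then 1 else 0) := by
  classical
  rw [sc_tv_eq_sum, sc_tv_eq_sum]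
  rw [← Finset.add_sum_erase (univ : Finset (Fin n))
      (fun j => if Function.update b i t j = c then 1 else 0) (mem_univ i),
    ← Finset.add_sum_erase (univ : Finset (Fin n))
      (fun j => if b j = c then 1 else 0) (mem_univ i)]
  have h1 : ∑ j ∈ univ.erase i, (if Function.update b i t j = c then 1 else 0)
      = ∑ j ∈ univ.erase i, (if b j = c then 1 else 0) := by
    refine Finset.sum_congr rfl fun j hj => ?_
    rw [Function.update_of_ne (Finset.ne_of_mem_erase hj)]
  simp only [Function.update_self, h1]
  omega

/-- Maximum of a ballot, characterized. -/
lemma maxScore_eq {n m : ℕ} (b : Ballot n m) (M : ℕ) (h1 : ∀ c, sc b c ≤ M)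
    (c0 : Fin m) (h2 : sc b c0 = M) : maxScore b = M := by
  refine le_antisymm (Finset.sup_le fun c _ => h1 c) ?_
  rw [← h2]; exact Finset.le_sup (mem_univ c0)

lemma mem_winSet {n m : ℕ} {b : Ballot n m} {c : Fin m} :
    c ∈ winSet b ↔ sc b c = maxScore b := by
  simp [winSet]

/-- The trichotomy for the winning set after voter `i` deviates from a
non-winning, non-truthful ballot to `t`. -/
lemma winSet_update {n m : ℕ} (hm : 0 < m) (b : Fin n → Fin m) (i : Fin n) (t : Fin m)
    (hti : t ≠ b i) (hbi : b i ∉ winSet (tv b)) :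
    winSet (tv (Function.update b i t)) = winSet (tv b)
    ∨ (t ∉ winSet (tv b) ∧
        winSet (tv (Function.update b i t)) = insert t (winSet (tv b)))
    ∨ winSet (tv (Function.update b i t)) = {t} := by
  classical
  have hle : ∀ c, sc (tv b) c ≤ maxScore (tv b) := fun c => sc_le_max _ c
  have hbiM : sc (tv b) (b i) ≠ maxScore (tv b) := fun h => hbi (mem_winSet.mpr h)
  have st : sc (tv (Function.update b i t)) t = sc (tv b) t + 1 := by
    have h1 : ¬ (b i = t) := fun h => hti h.symm
    have := sc_update b i t t
    simp [h1] at this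
    omega
  have sb : sc (tv (Function.update b i t)) (b i) + 1 = sc (tv b) (b i) := by
    have h1 : ¬ (t = b i) := hti
    have := sc_update b i t (b i)
    simp [h1] at this
    omega
  have so : ∀ c, c ≠ t → c ≠ b i → sc (tv (Function.update b i t)) c = sc (tv b) c := by
    intro c hct hcb
    have h1 : ¬ (b i = c) := fun h => hcb h.symm
    have h2 : ¬ (t = c) := fun h => hct h.symm
    have := sc_update b i t c
    simp [h1, h2] at this
    omega
  obtain ⟨w, hw⟩ := winSet_nonempty hm (tv b)
  have hwM : sc (tv b) w = maxScore (tv b) := mem_winSet.mp hw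
  have hleb := hle (b i)
  have hlet := hle t
  by_cases htW : sc (tv b) t = maxScore (tv b)
  · -- Case A : t was already a winner, now sole winner with score M+1
    right; right
    have hM' : maxScore (tv (Function.update b i t)) = maxScore (tv b) + 1 := by
      refine maxScore_eq _ _ (fun c => ?_) t (by rw [st, htW])
      by_cases hct : c = t
      · subst hct; omega
      · by_cases hcb : c = b i
        · subst hcb; omega
        · have h3 := hle c
          have h4 := so c hct hcb
          omega
    ext c
    rw [mem_winSet, hM', Finset.mem_singleton]
    constructor
    · intro hc
      by_contra hct
      by_cases hcb : c = b i
      · subst hcb; omega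
      · have h3 := hle c
        have h4 := so c hct hcb
        omega
    · rintro rfl; rw [st, htW]
  · by_cases htH : sc (tv b) t + 1 = maxScore (tv b)
    · -- Case B : t joins the winning set
      right; left
      have htW' : t ∉ winSet (tv b) := fun h => htW (mem_winSet.mp h)
      refine ⟨htW', ?_⟩
      have hM' : maxScore (tv (Function.update b i t)) = maxScore (tv b) := by
        refine maxScore_eq _ _ (fun c => ?_) t (by omega)
        by_cases hct : c = t
        · subst hct; omega
        · by_cases hcb : c = b i
          · subst hcb; omega
          · have h3 := hle c
            have h4 := so c hct hcb
            omega
      ext c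
      rw [mem_winSet, hM', Finset.mem_insert, mem_winSet]
      by_cases hct : c = t
      · subst hct; simp; omega
      · by_cases hcb : c = b i
        · subst hcb
          constructor
          · intro h; omega
          · rintro (h | h)
            · exact absurd h.symm hti
            · exact absurd h hbiM
        · rw [so c hct hcb]
          simp [hct]
    · -- Case C : winning set unchanged
      left
      have hwt : w ≠ t := fun h => htW (h ▸ hwM)
      have hwb : w ≠ b i := fun h => hbiM (h ▸ hwM)
      have hM' : maxScore (tv (Function.update b i t)) = maxScore (tv b) := by
        refine maxScore_eq _ _ (fun c => ?_) w (by rw [so w hwt hwb]; exact hwM)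
        by_cases hct : c = t
        · subst hct; omega
        · by_cases hcb : c = b i
          · subst hcb; omega
          · have h3 := hle c
            have h4 := so c hct hcb
            omega
      ext c
      rw [mem_winSet, hM', mem_winSet]
      by_cases hct : c = t
      · subst hct; constructor <;> intro h <;> omega
      · by_cases hcb : c = b i
        · subst hcb; constructor <;> intro h <;> omega
        · rw [so c hct hcb]

lemma min'_congr {α : Type*} [LinearOrder α] {s t : Finset α} (h : s = t)
    (hs : s.Nonempty) (ht : t.Nonempty) : s.min' hs = t.min' ht := by
  subst h; rfl

/-- The favourite candidate of a voter with utility `f` inside a nonempty set `S`. -/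
noncomputable def fav {m : ℕ} (f : Fin m → ℕ) (S : Finset (Fin m)) (hS : S.Nonempty) :
    Fin m :=
  (Finset.exists_max_image S f hS).choose

lemma fav_mem {m : ℕ} (f : Fin m → ℕ) (S : Finset (Fin m)) (hS : S.Nonempty) :
    fav f S hS ∈ S :=
  (Finset.exists_max_image S f hS).choose_spec.1

lemma fav_max {m : ℕ} (f : Fin m → ℕ) (S : Finset (Fin m)) (hS : S.Nonempty) :
    ∀ c ∈ S, f c ≤ f (fav f S hS) :=
  (Finset.exists_max_image S f hS).choose_spec.2

lemma fav_congr {m : ℕ} (f : Fin m → ℕ) {S T : Finset (Fin m)} (h : S = T)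
    (hS : S.Nonempty) (hT : T.Nonempty) : fav f S hS = fav f T hT := by
  subst h; rfl

lemma fav_unique {m : ℕ} {f : Fin m → ℕ} (hf : Function.Injective f)
    (S : Finset (Fin m)) (hS : S.Nonempty) (c : Fin m) :
    (c ∈ S ∧ ∀ c' ∈ S, f c' ≤ f c) ↔ c = fav f S hS := by
  constructor
  · rintro ⟨hc, hmax⟩
    exact hf (le_antisymm (fav_max f S hS c hc) (hmax _ (fav_mem f S hS)))
  · rintro rfl
    exact ⟨fav_mem f S hS, fav_max f S hS⟩

/-! ### Expected-utility formulas for the three rules -/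

lemma EU_pLex {n m : ℕ} (ui : Fin m → ℕ) (β : Ballot n m) (h : (winSet β).Nonempty) :
    EU ui (pLex β) = (ui ((winSet β).min' h) : ℚ) := by
  classical
  have key : ∀ c : Fin m,
      (c ∈ winSet β ∧ ∀ c' ∈ winSet β, (c : ℕ) ≤ (c' : ℕ)) ↔ c = (winSet β).min' h := by
    intro c
    constructor
    · rintro ⟨hc, hmin⟩
      exact le_antisymm (Finset.le_min' _ _ _ fun y hy => Fin.le_def.mpr (hmin y hy))
        (Finset.min'_le _ _ hc)
    · rintro rfl
      exact ⟨Finset.min'_mem _ _, fun c' hc' => Fin.le_def.mp (Finset.min'_le _ _ hc')⟩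
  unfold EU pLex
  simp only [key]
  rw [Finset.sum_congr rfl (fun c _ => by
    rw [ite_mul, one_mul, zero_mul] :
      ∀ c ∈ (univ : Finset (Fin m)), _ = if c = (winSet β).min' h then (ui c : ℚ) else 0)]
  rw [Finset.sum_ite_eq' univ ((winSet β).min' h) (fun c => (ui c : ℚ))]
  simp

lemma EU_pRC {n m : ℕ} (ui : Fin m → ℕ) (β : Ballot n m) :
    EU ui (pRC β) = (∑ c ∈ winSet β, (ui c : ℚ)) / (winSet β).card := by
  classical
  unfold EU pRC
  rw [Finset.sum_congr rfl (fun c _ => by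
    rw [ite_mul, zero_mul] :
      ∀ c ∈ (univ : Finset (Fin m)),
        _ = if c ∈ winSet β then ((winSet β).card : ℚ)⁻¹ * ui c else 0)]
  rw [Finset.sum_ite_mem, Finset.univ_inter, ← Finset.mul_sum, div_eq_inv_mul]

lemma EU_pRV {n m : ℕ} (u : Fin n → Fin m → ℕ) (hu : ∀ j, Function.Injective (u j))
    (i : Fin n) (β : Ballot n m) (h : (winSet β).Nonempty) :
    EU (u i) (pRV u β)
      = (∑ j : Fin n, (u i (fav (u j) (winSet β) h) : ℚ)) / n := by
  classical
  unfold EU pRV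
  have key : ∀ (j : Fin n) (c : Fin m),
      (c ∈ winSet β ∧ ∀ c' ∈ winSet β, u j c' ≤ u j c) ↔ c = fav (u j) (winSet β) h :=
    fun j c => fav_unique (hu j) (winSet β) h c
  have step : ∀ c : Fin m,
      ((univ.filter fun j : Fin n =>
          c ∈ winSet β ∧ ∀ c' ∈ winSet β, u j c' ≤ u j c).card : ℚ) / (n : ℚ) * (u i c : ℚ)
        = ∑ j : Fin n, (if c = fav (u j) (winSet β) h then (u i c : ℚ) / n else 0) := by
    intro c
    rw [Finset.card_filter]
    push_cast
    rw [Finset.sum_div, Finset.sum_mul]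
    refine Finset.sum_congr rfl fun j _ => ?_
    simp only [key j c]
    by_cases hc : c = fav (u j) (winSet β) h <;> simp [hc, inv_mul_eq_div, div_mul_eq_mul_div]
  rw [Finset.sum_congr rfl fun c _ => step c, Finset.sum_comm, Finset.sum_div]
  refine Finset.sum_congr rfl fun j _ => ?_
  rw [Finset.sum_ite_eq' univ (fav (u j) (winSet β) h) (fun c => (u i c : ℚ) / n)]
  simp

theorem stmt8 {n m : ℕ} (hn : 0 < n) (hm : 0 < m)
    (u : Fin n → Fin m → ℕ) (hu : ∀ i, Function.Injective (u i))
    (ε : ℚ) (hε0 : 0 < ε) (hε : ε < min ((m : ℚ)⁻¹) ((n : ℚ)⁻¹))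
    (a : Fin n → Fin m) (ha : ∀ i c, u i c ≤ u i (a i))
    (p : Ballot n m → Fin m → ℚ) (hp : p = pLex ∨ p = pRC ∨ p = pRV u)
    (b : Fin n → Fin m) (hb : tbPNE p u a ε b) :
    ∀ i : Fin n, b i = a i ∨ b i ∈ winSet (tv b) := by
  classical
  intro i
  by_contra hcon
  push_neg at hcon
  obtain ⟨hbi, hbW⟩ := hcon
  set t := a i with htdef
  set b' := Function.update b i t with hb'def
  have hti : t ≠ b i := fun h => hbi h.symm
  have htri := winSet_update hm b i t hti hbW
  have hW : (winSet (tv b)).Nonempty := winSet_nonempty hm (tv b)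
  have hW' : (winSet (tv b')).Nonempty := winSet_nonempty hm (tv b')
  have hEU : EU (u i) (p (tv b)) ≤ EU (u i) (p (tv b')) := by
    have htop : ∀ c, u i c ≤ u i t := fun c => ha i c
    rcases hp with rfl | rfl | rfl
    · -- lexicographic
      rw [EU_pLex (u i) (tv b) hW, EU_pLex (u i) (tv b') hW']
      rw [Nat.cast_le]
      rcases htri with hEq | ⟨htW, hIns⟩ | hSing
      · rw [min'_congr hEq hW' hW]
      · have hmem : (winSet (tv b')).min' hW' ∈ insert t (winSet (tv b)) := by
          rw [← hIns]; exact Finset.min'_mem _ _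
        rcases Finset.mem_insert.mp hmem with h1 | h1
        · rw [h1]; exact htop _
        · have h3 : (winSet (tv b)).min' hW ∈ winSet (tv (Function.update b i t)) := by
            rw [hIns]; exact Finset.mem_insert_of_mem (Finset.min'_mem _ _)
          have h2 : (winSet (tv b')).min' hW' = (winSet (tv b)).min' hW :=
            le_antisymm (Finset.min'_le _ _ h3) (Finset.min'_le _ _ h1)
          rw [h2]
      · rw [min'_congr hSing hW' (Finset.singleton_nonempty t), Finset.min'_singleton]
        exact htop _
    · -- random candidate
      rw [EU_pRC (u i) (tv b), EU_pRC (u i) (tv b')]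
      have hcard : (0 : ℚ) < (winSet (tv b)).card := by
        exact_mod_cast Finset.card_pos.mpr hW
      have hsum : ∑ c ∈ winSet (tv b), (u i c : ℚ)
          ≤ (winSet (tv b)).card * (u i t : ℚ) := by
        calc ∑ c ∈ winSet (tv b), (u i c : ℚ)
            ≤ ∑ _c ∈ winSet (tv b), (u i t : ℚ) :=
              Finset.sum_le_sum fun c _ => by exact_mod_cast htop c
          _ = (winSet (tv b)).card * (u i t : ℚ) := by
              rw [Finset.sum_const, nsmul_eq_mul]
      rcases htri with hEq | ⟨htW, hIns⟩ | hSing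
      · rw [hEq]
      · rw [hIns, Finset.sum_insert htW, Finset.card_insert_of_notMem htW]
        rw [div_le_div_iff₀ hcard (by push_cast; linarith)]
        push_cast
        ring_nf
        nlinarith [hsum]
      · rw [hSing]
        simp only [Finset.sum_singleton, Finset.card_singleton, Nat.cast_one, div_one]
        rw [div_le_iff₀ hcard]
        calc ∑ c ∈ winSet (tv b), (u i c : ℚ)
            ≤ (winSet (tv b)).card * (u i t : ℚ) := hsum
          _ = (u i t : ℚ) * (winSet (tv b)).card := by ring
    · -- random voter
      rw [EU_pRV u hu i (tv b) hW, EU_pRV u hu i (tv b') hW']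
      have hnpos : (0 : ℚ) < n := by exact_mod_cast hn
      rw [div_le_div_iff_of_pos_right hnpos]
      refine Finset.sum_le_sum fun j _ => ?_
      rw [Nat.cast_le]
      rcases htri with hEq | ⟨htW, hIns⟩ | hSing
      · rw [fav_congr (u j) hEq hW' hW]
      · set f' := fav (u j) (winSet (tv b')) hW' with hf'
        have hf'mem : f' ∈ insert t (winSet (tv b)) := by
          rw [← hIns]; exact fav_mem _ _ _
        rcases Finset.mem_insert.mp hf'mem with h1 | h1
        · rw [h1]; exact htop _
        · have : f' = fav (u j) (winSet (tv b)) hW := by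
            apply hu j
            refine le_antisymm (fav_max _ _ _ _ h1) ?_
            refine fav_max (u j) (winSet (tv b')) hW' _ ?_
            rw [hIns]
            exact Finset.mem_insert_of_mem (fav_mem _ _ _)
          rw [this]
      · have h2 : fav (u j) (winSet (tv b')) hW' = t := by
          rw [fav_congr (u j) hSing hW' (Finset.singleton_nonempty t)]
          exact Finset.mem_singleton.mp
            (fav_mem (u j) ({t} : Finset (Fin m)) (Finset.singleton_nonempty t))
        rw [h2]; exact htop _
  have hkey := hb i t
  rw [show Function.update b i t = b' from rfl] at hkey
  unfold tbU at hkey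
  rw [if_pos (by rw [hb'def, Function.update_self]), if_neg hbi] at hkey
  linarith
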